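/- Let Λ be an Artin algebra over a commutative Artinian ring R, and let Δ_{(φ,φ)} be the Morita ring of the Morita context with A = B = M = N = Λ (all bimodule structures given by the multiplication of Λ) and with structure maps φ = ψ, where φ : Λ × Λ → Λ is a balanced biadditive map satisfying the Morita-context conditions. Then Λ is Gorenstein if and only if Δ_{(φ,φ)} is Gorenstein, where an Artin algebra Γ is called Gorenstein if Γ has finite injective dimension both as a left Γ-module and as a right Γ-module. -/

import Mathlib

set_option linter.unusedVariables false
set_option linter.unusedSectionVars false

universe u v

variable (Λ : Type u) [Ring Λ]

/-- The data of a Morita context with `A = B = M = N = Λ` (all bimodule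
structures given by the ring multiplication of `Λ`): a balanced biadditive map
`φ : Λ × Λ → Λ` satisfying the Morita-context conditions.  (By Corollary 2.13
the two structure maps of such a context necessarily coincide.) -/
structure MoritaMaps where
  φ : Λ → Λ → Λ
  φ_add_left : ∀ m m' n, φ (m + m') n = φ m n + φ m' n
  φ_add_right : ∀ m n n', φ m (n + n') = φ m n + φ m n'
  φ_mul_left : ∀ b m n, φ (b * m) n = b * φ m n
  φ_mul_right : ∀ m n b, φ m (n * b) = φ m n * b
  φ_balanced : ∀ m a n, φ (m * a) n = φ m (a * n)
  φ_assoc₁ : ∀ m n m', φ m n * m' = m * φ n m'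
  φ_assoc₂ : ∀ n m n', n * φ m n' = φ n m * n'

variable {Λ}

/-- The Morita ring `Δ_{(φ,φ)}` of the Morita context `(Λ, Λ, Λ, Λ, φ, φ)`: its
underlying additive group is `Λ × Λ × Λ × Λ`, with multiplication
`(a,n,m,b)·(a',n',m',b') = (aa' + φ(n,m'), an' + nb', ma' + bm', bb' + φ(m,n'))`. -/
@[ext] structure Delta (c : MoritaMaps Λ) where
  a : Λ
  n : Λ
  m : Λ
  b : Λ

namespace Delta

variable {c : MoritaMaps Λ}

lemma φ_zero_left (n : Λ) : c.φ 0 n = 0 := by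
  have h := c.φ_add_left 0 0 n
  rw [add_zero] at h
  have h2 : c.φ 0 n + 0 = c.φ 0 n + c.φ 0 n := by rw [add_zero]; exact h
  exact (add_left_cancel h2).symm

lemma φ_zero_right (m : Λ) : c.φ m 0 = 0 := by
  have h := c.φ_add_right m 0 0
  rw [add_zero] at h
  have h2 : c.φ m 0 + 0 = c.φ m 0 + c.φ m 0 := by rw [add_zero]; exact h
  exact (add_left_cancel h2).symm

def equivProd : Delta c ≃ Λ × Λ × Λ × Λ where
  toFun x := (x.a, x.n, x.m, x.b)
  invFun p := ⟨p.1, p.2.1, p.2.2.1, p.2.2.2⟩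
  left_inv x := rfl
  right_inv p := rfl

instance instAddCommGroup : AddCommGroup (Delta c) :=
  (equivProd (c := c)).addCommGroup

@[simp] lemma add_a (x y : Delta c) : (x + y).a = x.a + y.a := rfl
@[simp] lemma add_n (x y : Delta c) : (x + y).n = x.n + y.n := rfl
@[simp] lemma add_m (x y : Delta c) : (x + y).m = x.m + y.m := rfl
@[simp] lemma add_b (x y : Delta c) : (x + y).b = x.b + y.b := rfl
@[simp] lemma zero_a : (0 : Delta c).a = 0 := rfl
@[simp] lemma zero_n : (0 : Delta c).n = 0 := rfl
@[simp] lemma zero_m : (0 : Delta c).m = 0 := rfl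
@[simp] lemma zero_b : (0 : Delta c).b = 0 := rfl

instance instMul : Mul (Delta c) :=
  ⟨fun x y => ⟨x.a * y.a + c.φ x.n y.m, x.a * y.n + x.n * y.b,
    x.m * y.a + x.b * y.m, x.b * y.b + c.φ x.m y.n⟩⟩

instance instOne : One (Delta c) := ⟨⟨1, 0, 0, 1⟩⟩

@[simp] lemma mul_a (x y : Delta c) : (x * y).a = x.a * y.a + c.φ x.n y.m := rfl
@[simp] lemma mul_n (x y : Delta c) : (x * y).n = x.a * y.n + x.n * y.b := rfl
@[simp] lemma mul_m (x y : Delta c) : (x * y).m = x.m * y.a + x.b * y.m := rfl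
@[simp] lemma mul_b (x y : Delta c) : (x * y).b = x.b * y.b + c.φ x.m y.n := rfl
@[simp] lemma one_a : (1 : Delta c).a = 1 := rfl
@[simp] lemma one_n : (1 : Delta c).n = 0 := rfl
@[simp] lemma one_m : (1 : Delta c).m = 0 := rfl
@[simp] lemma one_b : (1 : Delta c).b = 1 := rfl

instance instRing : Ring (Delta c) where
  __ := instAddCommGroup (c := c)
  __ := instMul
  __ := instOne
  mul_assoc x y z := by
    ext
    · simp only [mul_a, mul_n, mul_m, mul_b, c.φ_add_left, c.φ_add_right]
      rw [c.φ_balanced x.n y.b z.m]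
      simp only [c.φ_mul_left, c.φ_mul_right, add_mul, mul_add, mul_assoc]
      abel
    · simp only [mul_n, mul_a, mul_b, add_mul, mul_add, mul_assoc, c.φ_assoc₂]
      abel
    · simp only [mul_m, mul_a, mul_b, add_mul, mul_add, mul_assoc, c.φ_assoc₁]
      abel
    · simp only [mul_a, mul_n, mul_m, mul_b, c.φ_add_left, c.φ_add_right]
      rw [c.φ_balanced x.m y.a z.n]
      simp only [c.φ_mul_left, c.φ_mul_right, add_mul, mul_add, mul_assoc]
      abel
  one_mul x := by ext <;> simp [φ_zero_left]
  mul_one x := by ext <;> simp [φ_zero_right]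
  left_distrib x y z := by
    ext <;> simp [mul_add, c.φ_add_right] <;> abel
  right_distrib x y z := by
    ext <;> simp [add_mul, c.φ_add_left] <;> abel
  zero_mul x := by ext <;> simp [φ_zero_left]
  mul_zero x := by ext <;> simp [φ_zero_right]

end Delta

universe w

/-- `HasIDLE R n M` says that the left `R`-module `M` has injective dimension at
most `n`. -/
def HasIDLE (R : Type w) [Ring R] : ∀ (n : ℕ) (M : Type w) [AddCommGroup M] [Module R M], Prop
  | 0, M, _, _ => Module.Injective R M
  | n + 1, M, _, _ =>
    ∃ (I : Type w) (_ : AddCommGroup I) (_ : Module R I) (f : M →ₗ[R] I),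
      Function.Injective f ∧ Module.Injective R I ∧ HasIDLE R n (I ⧸ LinearMap.range f)

/-- A ring is Gorenstein if it has finite injective dimension as a left module and
as a right module over itself. -/
def IsGorenstein (Γ : Type w) [Ring Γ] : Prop :=
  (∃ n : ℕ, HasIDLE Γ n Γ) ∧ ∃ n : ℕ, HasIDLE Γᵐᵒᵖ n Γ


section Toolkit

variable {R : Type w} [Ring R]

theorem injective_of_retract {M N : Type w} [AddCommGroup M] [AddCommGroup N]
    [Module R M] [Module R N] (s : M →ₗ[R] N) (p : N →ₗ[R] M) (hsp : ∀ x, p (s x) = x)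
    (hN : Module.Injective R N) : Module.Injective R M where
  out X Y _ _ _ _ f hf g := by
    obtain ⟨h, hh⟩ := hN.out f hf (s.comp g)
    exact ⟨p.comp h, fun x => by simp [LinearMap.comp_apply, hh x, hsp]⟩

theorem injective_transport {S T : Type w} [Ring S] [Ring T] (σ : S ≃+* T)
    {M N : Type w} [AddCommGroup M] [AddCommGroup N] [Module S M] [Module T N]
    (e : M ≃+ N) (he : ∀ (s : S) (m : M), e (s • m) = σ s • e m)
    (hM : Module.Injective S M) : Module.Injective T N where
  out X Y _ _ _ _ f hf g := by
    letI : Module S X := Module.compHom X σ.toRingHom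
    letI : Module S Y := Module.compHom Y σ.toRingHom
    have hsx : ∀ (s : S) (x : X), s • x = σ s • x := fun _ _ => rfl
    have hsy : ∀ (s : S) (y : Y), s • y = σ s • y := fun _ _ => rfl
    have hes : ∀ (s : S) (n : N), e.symm (σ s • n) = s • e.symm n := by
      intro s n
      apply e.injective
      rw [he, e.apply_symm_apply, e.apply_symm_apply]
    let f' : X →ₗ[S] Y :=
      { toFun := f
        map_add' := f.map_add
        map_smul' := fun s x => by
          show f (σ s • x) = σ s • f x
          exact f.map_smul (σ s) x }
    let g' : X →ₗ[S] M :=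
      { toFun := fun x => e.symm (g x)
        map_add' := fun a b => by simp
        map_smul' := fun s x => by
          show e.symm (g (σ s • x)) = s • e.symm (g x)
          rw [g.map_smul, hes] }
    obtain ⟨h, hh⟩ := hM.out f' hf g'
    refine ⟨{ toFun := fun y => e (h y), map_add' := fun a b => by simp,
              map_smul' := fun t y => ?_ }, fun x => ?_⟩
    · obtain ⟨s, rfl⟩ := σ.surjective t
      show e (h (σ s • y)) = σ s • e (h y)
      rw [← hsy, h.map_smul, he]
    · show e (h (f x)) = g x
      have : h (f' x) = g' x := hh x
      rw [show h (f x) = g' x from this]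
      exact e.apply_symm_apply _

/-- An additive equivalence between quotients of the same group by submodules
(over possibly different rings) with the same underlying set. -/
noncomputable def quotAddEquivOfEq {S T : Type w} [Ring S] [Ring T] {I : Type w}
    [AddCommGroup I] [Module S I] [Module T I] (σ : S ≃+* T)
    (hst : ∀ (s : S) (x : I), s • x = σ s • x)
    (p : Submodule S I) (p' : Submodule T I) (h : ∀ x, x ∈ p ↔ x ∈ p') :
    (I ⧸ p) ≃+ (I ⧸ p') := by
  letI : Module S (I ⧸ p') := Module.compHom _ σ.toRingHom
  letI : Module T (I ⧸ p) := Module.compHom _ σ.symm.toRingHom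
  let m' : I →ₗ[S] (I ⧸ p') :=
    { toFun := fun x => Submodule.Quotient.mk x
      map_add' := fun a b => by simp
      map_smul' := fun s x => by
        show (Submodule.Quotient.mk (s • x) : I ⧸ p') = σ s • Submodule.Quotient.mk x
        rw [hst, Submodule.Quotient.mk_smul] }
  let m : I →ₗ[T] (I ⧸ p) :=
    { toFun := fun x => Submodule.Quotient.mk x
      map_add' := fun a b => by simp
      map_smul' := fun t x => by
        show (Submodule.Quotient.mk (t • x) : I ⧸ p) = σ.symm t • Submodule.Quotient.mk x
        rw [← Submodule.Quotient.mk_smul, hst, σ.apply_symm_apply] }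
  let u : (I ⧸ p) →ₗ[S] (I ⧸ p') := p.liftQ m' (by
    intro x hx
    exact (Submodule.Quotient.mk_eq_zero p').2 ((h x).1 hx))
  let v : (I ⧸ p') →ₗ[T] (I ⧸ p) := p'.liftQ m (by
    intro x hx
    exact (Submodule.Quotient.mk_eq_zero p).2 ((h x).2 hx))
  refine ⟨⟨u, v, fun x => ?_, fun x => ?_⟩, u.map_add⟩
  · obtain ⟨y, rfl⟩ := Submodule.Quotient.mk_surjective _ x
    rfl
  · obtain ⟨y, rfl⟩ := Submodule.Quotient.mk_surjective _ x
    rfl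

theorem quotAddEquivOfEq_mk {S T : Type w} [Ring S] [Ring T] {I : Type w}
    [AddCommGroup I] [Module S I] [Module T I] (σ : S ≃+* T)
    (hst : ∀ (s : S) (x : I), s • x = σ s • x)
    (p : Submodule S I) (p' : Submodule T I) (h : ∀ x, x ∈ p ↔ x ∈ p') (x : I) :
    quotAddEquivOfEq σ hst p p' h (Submodule.Quotient.mk x) = Submodule.Quotient.mk x := rfl

theorem hasIDLE_transport {S T : Type w} [Ring S] [Ring T] (σ : S ≃+* T) :
    ∀ (n : ℕ) (M : Type w) [AddCommGroup M] [Module S M] (N : Type w) [AddCommGroup N]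
      [Module T N] (e : M ≃+ N) (he : ∀ (s : S) (m : M), e (s • m) = σ s • e m),
      HasIDLE S n M → HasIDLE T n N := by
  intro n
  induction n with
  | zero =>
    intro M _ _ N _ _ e he hM
    exact injective_transport σ e he hM
  | succ n ih =>
    rintro M _ _ N _ _ e he ⟨I, _, _, f, hf, hI, hq⟩
    letI mT : Module T I := Module.compHom I σ.symm.toRingHom
    have hsm : ∀ (t : T) (x : I), t • x = σ.symm t • x := fun _ _ => rfl
    have hst : ∀ (s : S) (x : I), s • x = σ s • x := fun s x => by
      rw [hsm, σ.symm_apply_apply]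
    have hes : ∀ (t : T) (x : N), e.symm (t • x) = σ.symm t • e.symm x := by
      intro t x
      apply e.injective
      rw [he, σ.apply_symm_apply, e.apply_symm_apply, e.apply_symm_apply]
    let f' : N →ₗ[T] I :=
      { toFun := fun x => f (e.symm x)
        map_add' := fun a b => by simp
        map_smul' := fun t x => by
          show f (e.symm (t • x)) = t • f (e.symm x)
          rw [hes, f.map_smul, hsm] }
    have hf' : Function.Injective f' := fun a b hab => by
      have := hf hab
      exact e.symm.injective this
    have hII : Module.Injective T I :=
      injective_transport σ (AddEquiv.refl I)
        (fun s m => by show s • m = σ s • m; exact hst s m) hI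
    have hmem : ∀ x, x ∈ LinearMap.range f ↔ x ∈ LinearMap.range f' := by
      intro x
      constructor
      · rintro ⟨y, rfl⟩
        exact ⟨e y, by show f (e.symm (e y)) = f y; rw [e.symm_apply_apply]⟩
      · rintro ⟨y, rfl⟩
        exact ⟨e.symm y, rfl⟩
    refine ⟨I, inferInstance, mT, f', hf', hII, ?_⟩
    refine ih _ _ (quotAddEquivOfEq σ hst _ _ hmem) (fun s m => ?_) hq
    obtain ⟨x, rfl⟩ := Submodule.Quotient.mk_surjective _ m
    rw [← Submodule.Quotient.mk_smul, quotAddEquivOfEq_mk, quotAddEquivOfEq_mk,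
      ← Submodule.Quotient.mk_smul, hst]

theorem hasIDLE_congr {n : ℕ} {M N : Type w} [AddCommGroup M] [AddCommGroup N]
    [Module R M] [Module R N] (e : M ≃ₗ[R] N) (h : HasIDLE R n M) : HasIDLE R n N :=
  hasIDLE_transport (RingEquiv.refl R) n M N e.toAddEquiv (fun s m => e.map_smul s m) h

theorem injective_of_linearEquiv {M N : Type w} [AddCommGroup M] [AddCommGroup N]
    [Module R M] [Module R N] (e : M ≃ₗ[R] N) (h : Module.Injective R M) :
    Module.Injective R N :=
  injective_transport (RingEquiv.refl R) e.toAddEquiv (fun s m => e.map_smul s m) h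

end Toolkit
section ToolkitB
variable {R : Type w} [Ring R]

theorem injective_of_subsingleton (M : Type w) [AddCommGroup M] [Module R M]
    [Subsingleton M] : Module.Injective R M where
  out X Y _ _ _ _ f hf g := ⟨0, fun x => Subsingleton.elim _ _⟩

theorem injective_prod {M N : Type w} [AddCommGroup M] [AddCommGroup N]
    [Module R M] [Module R N] (hM : Module.Injective R M) (hN : Module.Injective R N) :
    Module.Injective R (M × N) where
  out X Y _ _ _ _ f hf g := by
    obtain ⟨h₁, hh₁⟩ := hM.out f hf ((LinearMap.fst R M N).comp g)
    obtain ⟨h₂, hh₂⟩ := hN.out f hf ((LinearMap.snd R M N).comp g)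
    exact ⟨h₁.prod h₂, fun x => by
      simp only [LinearMap.prod_apply, Function.prod, hh₁ x, hh₂ x, LinearMap.comp_apply,
        LinearMap.fst_apply, LinearMap.snd_apply]⟩

theorem hasIDLE_of_subsingleton : ∀ (n : ℕ) (M : Type w) [AddCommGroup M] [Module R M]
    [Subsingleton M], HasIDLE R n M := by
  intro n
  induction n with
  | zero => intro M _ _ hs; haveI := hs; exact injective_of_subsingleton M
  | succ n ih =>
    intro M _ _ hs; haveI := hs
    refine ⟨M, inferInstance, inferInstance, LinearMap.id, fun a b h => h,
      injective_of_subsingleton M, ?_⟩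
    haveI : Subsingleton (M ⧸ LinearMap.range (LinearMap.id : M →ₗ[R] M)) :=
      Quotient.instSubsingletonQuotient _
    exact ih _

theorem hasIDLE_of_injective : ∀ (n : ℕ) (M : Type w) [AddCommGroup M] [Module R M],
    Module.Injective R M → HasIDLE R n M := by
  intro n
  cases n with
  | zero => intro M _ _ h; exact h
  | succ n =>
    intro M _ _ h
    refine ⟨M, inferInstance, inferInstance, LinearMap.id, fun a b hh => hh, h, ?_⟩
    haveI : Subsingleton (M ⧸ LinearMap.range (LinearMap.id : M →ₗ[R] M)) :=
      Submodule.Quotient.subsingleton_iff.mpr LinearMap.range_id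
    exact hasIDLE_of_subsingleton _ _

/-- The quotient of a product by a product of ranges. -/
noncomputable def prodQuotEquiv {M N I J : Type w} [AddCommGroup M] [AddCommGroup N]
    [AddCommGroup I] [AddCommGroup J] [Module R M] [Module R N] [Module R I] [Module R J]
    (f : M →ₗ[R] I) (g : N →ₗ[R] J) :
    ((I × J) ⧸ LinearMap.range (f.prodMap g)) ≃ₗ[R]
      (I ⧸ LinearMap.range f) × (J ⧸ LinearMap.range g) := by
  have hrange : LinearMap.range (f.prodMap g) =
      LinearMap.ker (((LinearMap.range f).mkQ).prodMap ((LinearMap.range g).mkQ)) := by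
    rw [LinearMap.ker_prodMap, Submodule.ker_mkQ, Submodule.ker_mkQ]
    ext ⟨x, y⟩
    constructor
    · rintro ⟨⟨a, b⟩, h⟩
      exact ⟨⟨a, congrArg Prod.fst h⟩, ⟨b, congrArg Prod.snd h⟩⟩
    · rintro ⟨⟨a, ha⟩, ⟨b, hb⟩⟩
      exact ⟨(a, b), by simp [LinearMap.prodMap_apply, ha, hb]⟩
  refine (Submodule.quotEquivOfEq _ _ hrange).trans
    (LinearMap.quotKerEquivOfSurjective _ ?_)
  intro ⟨x, y⟩
  obtain ⟨a, ha⟩ := Submodule.Quotient.mk_surjective _ x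
  obtain ⟨b, hb⟩ := Submodule.Quotient.mk_surjective _ y
  refine ⟨(a, b), ?_⟩
  show ((LinearMap.range f).mkQ a, (LinearMap.range g).mkQ b) = (x, y)
  rw [Submodule.mkQ_apply, Submodule.mkQ_apply, ha, hb]

theorem hasIDLE_prod : ∀ (n : ℕ) (M N : Type w) [AddCommGroup M] [AddCommGroup N]
    [Module R M] [Module R N], HasIDLE R n M → HasIDLE R n N → HasIDLE R n (M × N) := by
  intro n
  induction n with
  | zero => intro M N _ _ _ _ hM hN; exact injective_prod hM hN
  | succ n ih =>
    rintro M N _ _ _ _ ⟨I, _, _, f, hf, hI, hqf⟩ ⟨J, _, _, g, hg, hJ, hqg⟩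
    refine ⟨I × J, inferInstance, inferInstance, f.prodMap g, ?_, injective_prod hI hJ, ?_⟩
    · intro a b hab
      have h1 : f a.1 = f b.1 := congrArg Prod.fst hab
      have h2 : g a.2 = g b.2 := congrArg Prod.snd hab
      exact Prod.ext (hf h1) (hg h2)
    · exact hasIDLE_congr (prodQuotEquiv f g).symm (ih _ _ hqf hqg)

/-- If an injective module embeds into `W`, it splits off. -/
noncomputable def splitEquiv {I W : Type w} [AddCommGroup I] [AddCommGroup W]
    [Module R I] [Module R W] (g : I →ₗ[R] W) (hg : Function.Injective g)
    (hI : Module.Injective R I) :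
    W ≃ₗ[R] I × (W ⧸ LinearMap.range g) := by
  let r := (hI.out g hg (LinearMap.id : I →ₗ[R] I)).choose
  have hr : ∀ x, r (g x) = x := (hI.out g hg (LinearMap.id : I →ₗ[R] I)).choose_spec
  refine LinearEquiv.ofBijective (r.prod (LinearMap.range g).mkQ) ⟨?_, ?_⟩
  · intro a b hab
    have h1 : r a = r b := congrArg Prod.fst hab
    have h2 : Submodule.Quotient.mk a = (Submodule.Quotient.mk b : W ⧸ LinearMap.range g) :=
      congrArg Prod.snd hab
    rw [Submodule.Quotient.eq] at h2
    obtain ⟨y, hy⟩ := h2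
    have : r (a - b) = 0 := by rw [map_sub, h1, sub_self]
    rw [← hy, hr] at this
    subst this
    exact sub_eq_zero.mp (by simpa using hy.symm)
  · rintro ⟨i, x⟩
    obtain ⟨w, rfl⟩ := Submodule.Quotient.mk_surjective _ x
    refine ⟨w - g (r w) + g i, ?_⟩
    have h1 : r (w - g (r w) + g i) = i := by
      simp [map_sub, map_add, hr]
    have h2 : (Submodule.Quotient.mk (w - g (r w) + g i) : W ⧸ LinearMap.range g)
        = Submodule.Quotient.mk w := by
      rw [Submodule.Quotient.eq]
      exact ⟨i - r w, by simp [map_sub]; abel⟩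
    exact Prod.ext h1 h2

end ToolkitB
section ToolkitC
variable {R : Type w} [Ring R]

theorem hasIDLE_of_prod_injective (n : ℕ) (C I' : Type w) [AddCommGroup C] [AddCommGroup I']
    [Module R C] [Module R I'] (hI' : Module.Injective R I') (h : HasIDLE R n (C × I')) :
    HasIDLE R n C := by
  cases n with
  | zero =>
    exact injective_of_retract (LinearMap.inl R C I') (LinearMap.fst R C I')
      (fun x => rfl) h
  | succ n =>
    obtain ⟨J, _, _, F, hF, hJ, hq⟩ := h
    let f : C →ₗ[R] J := F.comp (LinearMap.inl R C I')
    have hf : Function.Injective f := fun a b hab => congrArg Prod.fst (hF hab)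
    let g : I' →ₗ[R] (J ⧸ LinearMap.range f) :=
      (LinearMap.range f).mkQ.comp (F.comp (LinearMap.inr R C I'))
    have hg : Function.Injective g := by
      intro a b hab
      have h0 : Submodule.Quotient.mk (F (0, a) - F (0, b)) =
          (0 : J ⧸ LinearMap.range f) := by
        rw [Submodule.Quotient.mk_sub, sub_eq_zero]; exact hab
      rw [Submodule.Quotient.mk_eq_zero] at h0
      obtain ⟨cc, hcc⟩ := h0
      have h2 : F (cc, 0) = F (0, a) - F (0, b) := hcc
      rw [← map_sub] at h2
      have h3 : (cc, (0 : I')) = ((0 : C), a - b) := hF (by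
        rw [h2]; congr 1 <;> simp)
      have h4 : (0 : I') = a - b := congrArg Prod.snd h3
      rw [eq_comm, sub_eq_zero] at h4
      exact h4
    have hle : LinearMap.range f ≤ LinearMap.range F := by
      rintro x ⟨a, rfl⟩
      exact ⟨(a, 0), rfl⟩
    have hrg : LinearMap.range g = (LinearMap.range F).map (LinearMap.range f).mkQ := by
      apply le_antisymm
      · rintro x ⟨a, rfl⟩
        exact ⟨F (0, a), ⟨(0, a), rfl⟩, rfl⟩
      · rintro x ⟨y, ⟨⟨cc, a⟩, rfl⟩, rfl⟩
        refine ⟨a, ?_⟩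
        show Submodule.Quotient.mk (F (0, a)) = Submodule.Quotient.mk (F (cc, a))
        rw [Submodule.Quotient.eq]
        refine ⟨-cc, ?_⟩
        show F (-cc, 0) = F (0, a) - F (cc, a)
        rw [← map_sub]
        congr 1 <;> simp
    let eQQ : ((J ⧸ LinearMap.range f) ⧸ LinearMap.range g) ≃ₗ[R] (J ⧸ LinearMap.range F) :=
      (Submodule.quotEquivOfEq _ _ hrg).trans
        (Submodule.quotientQuotientEquivQuotient _ _ hle)
    have hq' : HasIDLE R n ((J ⧸ LinearMap.range f) ⧸ LinearMap.range g) :=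
      hasIDLE_congr eQQ.symm hq
    have hmain : HasIDLE R n (J ⧸ LinearMap.range f) :=
      hasIDLE_congr (splitEquiv g hg hI').symm
        (hasIDLE_prod n _ _ (hasIDLE_of_injective n _ hI') hq')
    exact ⟨J, inferInstance, inferInstance, f, hf, hJ, hmain⟩

/-- Half of Schanuel's lemma for injective embeddings. -/
noncomputable def schanuelHalf {A I I' : Type w} [AddCommGroup A] [AddCommGroup I]
    [AddCommGroup I'] [Module R A] [Module R I] [Module R I']
    (f : A →ₗ[R] I) (hI : Module.Injective R I)
    (f' : A →ₗ[R] I') (hf' : Function.Injective f') :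
    ((I × I') ⧸ LinearMap.range (f.prod (-f'))) ≃ₗ[R] I × (I' ⧸ LinearMap.range f') := by
  set d : A →ₗ[R] I × I' := f.prod (-f') with hd
  let jI : I →ₗ[R] ((I × I') ⧸ LinearMap.range d) :=
    (LinearMap.range d).mkQ.comp (LinearMap.inl R I I')
  have hjI : Function.Injective jI := by
    intro a b hab
    have h0 : Submodule.Quotient.mk ((a, (0 : I')) - (b, 0)) =
        (0 : (I × I') ⧸ LinearMap.range d) := by
      rw [Submodule.Quotient.mk_sub, sub_eq_zero]; exact hab
    rw [Submodule.Quotient.mk_eq_zero] at h0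
    obtain ⟨x, hx⟩ := h0
    have h2 : -f' x = (0 : I') - 0 := congrArg Prod.snd hx
    have hx0 : x = 0 := by
      apply hf'
      rw [map_zero, ← neg_eq_zero]
      simpa using h2
    have h1 : f x = a - b := congrArg Prod.fst hx
    rw [hx0, map_zero, eq_comm, sub_eq_zero] at h1
    exact h1
  let π : ((I × I') ⧸ LinearMap.range d) →ₗ[R] (I' ⧸ LinearMap.range f') :=
    (LinearMap.range d).liftQ ((LinearMap.range f').mkQ.comp (LinearMap.snd R I I'))
      (by rintro x ⟨a, rfl⟩
          show Submodule.Quotient.mk (d a).2 ∈ (⊥ : Submodule R (I' ⧸ LinearMap.range f'))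
          rw [Submodule.mem_bot, Submodule.Quotient.mk_eq_zero]
          exact ⟨-a, by simp [hd]⟩)
  have hπsurj : Function.Surjective π := by
    intro x
    obtain ⟨v, rfl⟩ := Submodule.Quotient.mk_surjective _ x
    exact ⟨Submodule.Quotient.mk ((0 : I), v), rfl⟩
  have hker : LinearMap.ker π = LinearMap.range jI := by
    ext x
    constructor
    · intro hx
      obtain ⟨⟨u, v⟩, rfl⟩ := Submodule.Quotient.mk_surjective _ x
      have h0 : (Submodule.Quotient.mk v : I' ⧸ LinearMap.range f') = 0 := hx
      rw [Submodule.Quotient.mk_eq_zero] at h0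
      obtain ⟨a, ha⟩ := h0
      refine ⟨u + f a, ?_⟩
      show Submodule.Quotient.mk (u + f a, (0 : I')) = Submodule.Quotient.mk (u, v)
      rw [Submodule.Quotient.eq]
      exact ⟨a, by simp [hd, ha]⟩
    · rintro ⟨u, rfl⟩
      show π (Submodule.Quotient.mk (u, (0 : I'))) = 0
      have : π (Submodule.Quotient.mk (u, (0 : I'))) =
          Submodule.Quotient.mk (0 : I') := rfl
      rw [this, Submodule.Quotient.mk_zero]
  refine (splitEquiv jI hjI hI).trans (LinearEquiv.prodCongr (LinearEquiv.refl R I) ?_)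
  exact LinearEquiv.trans
    (Submodule.quotEquivOfEq (LinearMap.range jI) (LinearMap.ker π) hker.symm)
    (LinearMap.quotKerEquivOfSurjective π hπsurj)

/-- Schanuel's lemma for injective embeddings. -/
noncomputable def schanuelEquiv {A I I' : Type w} [AddCommGroup A] [AddCommGroup I]
    [AddCommGroup I'] [Module R A] [Module R I] [Module R I']
    (f : A →ₗ[R] I) (hf : Function.Injective f) (hI : Module.Injective R I)
    (f' : A →ₗ[R] I') (hf' : Function.Injective f') (hI' : Module.Injective R I') :
    ((I ⧸ LinearMap.range f) × I') ≃ₗ[R] ((I' ⧸ LinearMap.range f') × I) := by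
  let eW : ((I' × I) ⧸ LinearMap.range (f'.prod (-f))) ≃ₗ[R]
      ((I × I') ⧸ LinearMap.range (f.prod (-f'))) :=
    Submodule.Quotient.equiv _ _ (LinearEquiv.prodComm R I' I) (by
      apply le_antisymm
      · rintro x ⟨y, ⟨a, rfl⟩, rfl⟩
        exact ⟨-a, by simp⟩
      · rintro x ⟨a, rfl⟩
        exact ⟨(f' (-a), -f (-a)), ⟨-a, rfl⟩, by simp⟩)
  exact (LinearEquiv.prodComm R _ _).trans
    ((schanuelHalf f' hI' f hf).symm.trans
      (eW.trans ((schanuelHalf f hI f' hf').trans (LinearEquiv.prodComm R _ _))))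

theorem hasIDLE_shift {n : ℕ} {M I : Type w} [AddCommGroup M] [AddCommGroup I]
    [Module R M] [Module R I] (h : HasIDLE R (n + 1) M)
    (f : M →ₗ[R] I) (hf : Function.Injective f) (hI : Module.Injective R I) :
    HasIDLE R n (I ⧸ LinearMap.range f) := by
  obtain ⟨J, _, _, g, hg, hJ, hq⟩ := h
  have h1 : HasIDLE R n ((J ⧸ LinearMap.range g) × I) :=
    hasIDLE_prod n _ _ hq (hasIDLE_of_injective n _ hI)
  have h2 : HasIDLE R n ((I ⧸ LinearMap.range f) × J) :=
    hasIDLE_congr (schanuelEquiv g hg hJ f hf hI) h1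
  exact hasIDLE_of_prod_injective n _ _ hJ h2

theorem exists_injective_embedding (M : Type w) [AddCommGroup M] [Module R M] :
    ∃ (I : Type w) (_ : AddCommGroup I) (_ : Module R I) (f : M →ₗ[R] I),
      Function.Injective f ∧ Module.Injective R I := by
  let Mc : ModuleCat.{w} R := ModuleCat.of R M
  let I := CategoryTheory.Injective.under Mc
  let fI : Mc ⟶ I := CategoryTheory.Injective.ι Mc
  have hmono : Function.Injective fI := by
    rw [← ModuleCat.mono_iff_injective]
    infer_instance
  haveI hobj : CategoryTheory.Injective (ModuleCat.of R I) :=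
    (inferInstance : CategoryTheory.Injective I)
  have hinj : Module.Injective R I := Module.injective_module_of_injective_object R I
  exact ⟨I, inferInstance, inferInstance, fI.hom, hmono, hinj⟩

theorem hasIDLE_prod_left : ∀ (n : ℕ) (M N : Type w) [AddCommGroup M] [AddCommGroup N]
    [Module R M] [Module R N], HasIDLE R n (M × N) → HasIDLE R n M := by
  intro n
  induction n with
  | zero =>
    intro M N _ _ _ _ h
    exact injective_of_retract (LinearMap.inl R M N) (LinearMap.fst R M N) (fun x => rfl) h
  | succ n ih =>
    intro M N _ _ _ _ h
    obtain ⟨IM, _, _, fM, hfM, hIM⟩ := exists_injective_embedding (R := R) M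
    obtain ⟨IN, _, _, fN, hfN, hIN⟩ := exists_injective_embedding (R := R) N
    have hprodinj : Function.Injective (fM.prodMap fN) := by
      intro a b hab
      exact Prod.ext (hfM (congrArg Prod.fst hab)) (hfN (congrArg Prod.snd hab))
    have h1 := hasIDLE_shift h (fM.prodMap fN) hprodinj (injective_prod hIM hIN)
    have h2 := hasIDLE_congr (prodQuotEquiv fM fN) h1
    exact ⟨IM, inferInstance, inferInstance, fM, hfM, hIM, ih _ _ h2⟩

end ToolkitC
namespace Delta

variable {c : MoritaMaps Λ}

/-- The central element `t = φ(1,1)`. -/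
def tval (c : MoritaMaps Λ) : Λ := c.φ 1 1

lemma φ_eq (x y : Λ) : c.φ x y = x * (y * tval c) := by
  have h1 : c.φ x y * 1 = x * c.φ y 1 := c.φ_assoc₁ x y 1
  have h2 : y * c.φ 1 1 = c.φ y 1 * 1 := c.φ_assoc₂ y 1 1
  rw [mul_one] at h1 h2
  rw [h1, ← h2]
  rfl

lemma t_comm (a : Λ) : a * tval c = tval c * a := by
  have h1 : tval c * a = c.φ 1 a := by
    have := c.φ_assoc₁ 1 1 a
    rw [one_mul] at this
    exact this
  have h2 : a * tval c = c.φ a 1 := by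
    have := c.φ_assoc₂ a 1 1
    rw [mul_one] at this
    exact this
  have h3 : c.φ a 1 = c.φ 1 a := by
    have := c.φ_balanced 1 a 1
    rw [one_mul, mul_one] at this
    exact this
  rw [h1, h2, h3]

/-- The diagonal ring homomorphism `Λ → Δ`. -/
def iota (c : MoritaMaps Λ) : Λ →+* Delta c where
  toFun a := ⟨a, 0, 0, a⟩
  map_one' := rfl
  map_zero' := rfl
  map_add' a b := by ext <;> simp
  map_mul' a b := by ext <;> simp [φ_zero_left, φ_zero_right]

@[simp] lemma iota_a (a : Λ) : (iota c a).a = a := rfl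
@[simp] lemma iota_n (a : Λ) : (iota c a).n = 0 := rfl
@[simp] lemma iota_m (a : Λ) : (iota c a).m = 0 := rfl
@[simp] lemma iota_b (a : Λ) : (iota c a).b = a := rfl

/-- `Δ` as a `Λ`-module via the diagonal embedding. -/
instance instModuleLambda : Module Λ (Delta c) := (iota c).toModule

lemma lam_smul (a : Λ) (x : Delta c) : a • x = iota c a * x := rfl

lemma iota_mul (a : Λ) (x : Delta c) :
    iota c a * x = ⟨a * x.a, a * x.n, a * x.m, a * x.b⟩ := by
  ext <;> simp [φ_zero_left, φ_zero_right]

lemma mul_iota (a : Λ) (x : Delta c) :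
    x * iota c a = ⟨x.a * a, x.n * a, x.m * a, x.b * a⟩ := by
  ext <;> simp [φ_zero_left, φ_zero_right]

@[simp] lemma lam_smul_a (a : Λ) (x : Delta c) : (a • x).a = a * x.a := by
  rw [lam_smul, iota_mul]
@[simp] lemma lam_smul_n (a : Λ) (x : Delta c) : (a • x).n = a * x.n := by
  rw [lam_smul, iota_mul]
@[simp] lemma lam_smul_m (a : Λ) (x : Delta c) : (a • x).m = a * x.m := by
  rw [lam_smul, iota_mul]
@[simp] lemma lam_smul_b (a : Λ) (x : Delta c) : (a • x).b = a * x.b := by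
  rw [lam_smul, iota_mul]

def E11 : Delta c := ⟨1, 0, 0, 0⟩
def E12 : Delta c := ⟨0, 1, 0, 0⟩
def E21 : Delta c := ⟨0, 0, 1, 0⟩
def E22 : Delta c := ⟨0, 0, 0, 1⟩

lemma decomp (y : Delta c) :
    y.a • (E11 : Delta c) + y.n • E12 + y.m • E21 + y.b • E22 = y := by
  ext <;> simp [E11, E12, E21, E22]

lemma E11_mul (x : Delta c) : E11 * x = ⟨x.a, x.n, 0, 0⟩ := by
  ext <;> simp [E11, φ_zero_left, φ_zero_right]
lemma E12_mul (x : Delta c) : E12 * x = ⟨c.φ 1 x.m, x.b, 0, 0⟩ := by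
  ext <;> simp [E12, φ_zero_left, φ_zero_right]
lemma E21_mul (x : Delta c) : E21 * x = ⟨0, 0, x.a, c.φ 1 x.n⟩ := by
  ext <;> simp [E21, φ_zero_left, φ_zero_right]
lemma E22_mul (x : Delta c) : E22 * x = ⟨0, 0, x.m, x.b⟩ := by
  ext <;> simp [E22, φ_zero_left, φ_zero_right]

lemma mul_E11 (x : Delta c) : x * E11 = ⟨x.a, 0, x.m, 0⟩ := by
  ext <;> simp [E11, φ_zero_left, φ_zero_right]
lemma mul_E12 (x : Delta c) : x * E12 = ⟨0, x.a, 0, c.φ x.m 1⟩ := by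
  ext <;> simp [E12, φ_zero_left, φ_zero_right]
lemma mul_E21 (x : Delta c) : x * E21 = ⟨c.φ x.n 1, 0, x.b, 0⟩ := by
  ext <;> simp [E21, φ_zero_left, φ_zero_right]
lemma mul_E22 (x : Delta c) : x * E22 = ⟨0, x.n, 0, x.b⟩ := by
  ext <;> simp [E22, φ_zero_left, φ_zero_right]

end Delta
namespace Delta

variable {c : MoritaMaps Λ}

/-- Right multiplication as a `Λ`-linear map on `Δ`. -/
def mulRightL (c : MoritaMaps Λ) (x : Delta c) : Delta c →ₗ[Λ] Delta c where
  toFun y := y * x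
  map_add' y z := add_mul y z x
  map_smul' a y := by
    show (a • y) * x = a • (y * x)
    rw [lam_smul, lam_smul, mul_assoc]

section Coind
variable (c : MoritaMaps Λ) (M : Type u) [AddCommGroup M] [Module Λ M]

instance coindSMul : SMul (Delta c) (Delta c →ₗ[Λ] M) :=
  ⟨fun x g => g.comp (mulRightL c x)⟩

lemma coind_smul_apply (x : Delta c) (g : Delta c →ₗ[Λ] M) (y : Delta c) :
    (x • g) y = g (y * x) := rfl

instance coindModule : Module (Delta c) (Delta c →ₗ[Λ] M) where
  one_smul g := by ext y; simp [coind_smul_apply]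
  mul_smul x x' g := by ext y; simp [coind_smul_apply, mul_assoc]
  smul_zero x := by ext y; simp [coind_smul_apply]
  smul_add x g h := by ext y; simp [coind_smul_apply]
  add_smul x x' g := by ext y; simp [coind_smul_apply, mul_add]
  zero_smul g := by ext y; simp [coind_smul_apply]

lemma iota_eq_smul_one (a : Λ) : iota c a = a • (1 : Delta c) := by
  rw [lam_smul, mul_one]

theorem coind_injective (hM : Module.Injective Λ M) :
    Module.Injective (Delta c) (Delta c →ₗ[Λ] M) where
  out X Y _ _ _ _ i hi f := by
    letI : Module Λ X := Module.compHom X (iota c)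
    letI : Module Λ Y := Module.compHom Y (iota c)
    have hsX : ∀ (a : Λ) (x : X), a • x = iota c a • x := fun _ _ => rfl
    have hsY : ∀ (a : Λ) (y : Y), a • y = iota c a • y := fun _ _ => rfl
    let i' : X →ₗ[Λ] Y :=
      { toFun := i
        map_add' := i.map_add
        map_smul' := fun a x => i.map_smul (iota c a) x }
    let f0 : X →ₗ[Λ] M :=
      { toFun := fun x => f x 1
        map_add' := fun x y => by simp
        map_smul' := fun a x => by
          show f (iota c a • x) 1 = a • f x 1
          rw [f.map_smul, coind_smul_apply, one_mul, iota_eq_smul_one, map_smul] }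
    obtain ⟨ψ, hψ⟩ := hM.out i' hi f0
    refine ⟨?_, ?_⟩
    · refine
        { toFun := fun y =>
            { toFun := fun d => ψ (d • y)
              map_add' := fun d d' => by
                show ψ ((d + d') • y) = ψ (d • y) + ψ (d' • y)
                rw [add_smul, map_add]
              map_smul' := fun a d => by
                show ψ ((iota c a * d) • y) = a • ψ (d • y)
                rw [mul_smul]
                exact ψ.map_smul a (d • y) }
          map_add' := fun y y' => by ext d; simp
          map_smul' := fun x y => by
            ext d
            show ψ (d • x • y) = ψ ((d * x) • y)
            rw [mul_smul] }
    · intro x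
      ext d
      show ψ (d • i x) = f x d
      have h1 : d • i x = i (d • x) := (i.map_smul d x).symm
      rw [h1]
      have h2 : ψ (i' (d • x)) = f0 (d • x) := hψ (d • x)
      have h3 : f0 (d • x) = f (d • x) 1 := rfl
      have h4 : f (d • x) = d • f x := f.map_smul d x
      show ψ (i' (d • x)) = f x d
      rw [h2, h3, h4, coind_smul_apply, one_mul]

/-- Post-composition with a `Λ`-linear map, as a `Δ`-linear map. -/
def coindMap {M N : Type u} [AddCommGroup M] [Module Λ M] [AddCommGroup N] [Module Λ N]
    (h : M →ₗ[Λ] N) : (Delta c →ₗ[Λ] M) →ₗ[Delta c] (Delta c →ₗ[Λ] N) where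
  toFun g := h.comp g
  map_add' g g' := by ext d; simp
  map_smul' x g := by ext d; rfl

theorem coindMap_surjective {M N : Type u} [AddCommGroup M] [Module Λ M] [AddCommGroup N]
    [Module Λ N] (h : M →ₗ[Λ] N) (hs : Function.Surjective h) :
    Function.Surjective (coindMap c h) := by
  intro g
  obtain ⟨w11, hw11⟩ := hs (g E11)
  obtain ⟨w12, hw12⟩ := hs (g E12)
  obtain ⟨w21, hw21⟩ := hs (g E21)
  obtain ⟨w22, hw22⟩ := hs (g E22)
  refine ⟨{ toFun := fun d => d.a • w11 + d.n • w12 + d.m • w21 + d.b • w22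
            map_add' := fun d d' => by
              simp only [add_a, add_n, add_m, add_b, add_smul]
              abel
            map_smul' := fun a d => by
              simp only [lam_smul_a, lam_smul_n, lam_smul_m, lam_smul_b, mul_smul,
                RingHom.id_apply, smul_add] }, ?_⟩
  ext d
  show h (d.a • w11 + d.n • w12 + d.m • w21 + d.b • w22) = g d
  rw [map_add, map_add, map_add, map_smul, map_smul, map_smul, map_smul,
    hw11, hw12, hw21, hw22]
  rw [← map_smul, ← map_smul, ← map_smul, ← map_smul, ← map_add, ← map_add, ← map_add, decomp]

theorem coind_hasIDLE : ∀ (n : ℕ) (M : Type u) [AddCommGroup M] [Module Λ M],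
    HasIDLE Λ n M → HasIDLE (Delta c) n (Delta c →ₗ[Λ] M) := by
  intro n
  induction n with
  | zero => intro M _ _ h; exact coind_injective c M h
  | succ n ih =>
    rintro M _ _ ⟨I, _, _, f, hf, hI, hq⟩
    have hinj : Function.Injective (coindMap c f) := by
      intro g g' hgg
      ext d
      apply hf
      exact congrArg (fun (F : Delta c →ₗ[Λ] I) => F d) hgg
    refine ⟨Delta c →ₗ[Λ] I, inferInstance, inferInstance, coindMap c f, hinj,
      coind_injective c I hI, ?_⟩
    let π := coindMap c (LinearMap.range f).mkQ
    have hπs : Function.Surjective π :=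
      coindMap_surjective c _ (Submodule.Quotient.mk_surjective _)
    have hker : LinearMap.ker π = LinearMap.range (coindMap c f) := by
      ext g
      constructor
      · intro hg
        have hval : ∀ d, g d ∈ LinearMap.range f := by
          intro d
          have : ((LinearMap.range f).mkQ.comp g) d = 0 :=
            congrArg (fun (F : Delta c →ₗ[Λ] (I ⧸ LinearMap.range f)) => F d) hg
          rw [LinearMap.comp_apply, Submodule.mkQ_apply, Submodule.Quotient.mk_eq_zero] at this
          exact this
        let e := LinearEquiv.ofInjective f hf
        refine ⟨(e.symm.toLinearMap).comp (g.codRestrict (LinearMap.range f) hval), ?_⟩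
        ext d
        show f (e.symm ⟨g d, hval d⟩) = g d
        have h5 : ∀ z : LinearMap.range f, f (e.symm z) = z := by
          intro z
          have h6 : e (e.symm z) = z := e.apply_symm_apply z
          have h7 : (e (e.symm z) : I) = f (e.symm z) := by
            rw [LinearEquiv.ofInjective_apply]
          rw [← h7, h6]
        exact h5 _
      · rintro ⟨g', rfl⟩
        ext d
        show ((LinearMap.range f).mkQ) (f (g' d)) = 0
        rw [Submodule.mkQ_apply, Submodule.Quotient.mk_eq_zero]
        exact ⟨g' d, rfl⟩
    have hquot : ((Delta c →ₗ[Λ] I) ⧸ LinearMap.range (coindMap c f)) ≃ₗ[Delta c]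
        (Delta c →ₗ[Λ] (I ⧸ LinearMap.range f)) :=
      (Submodule.quotEquivOfEq _ _ hker.symm).trans (LinearMap.quotKerEquivOfSurjective π hπs)
    exact hasIDLE_congr hquot.symm (ih _ hq)

end Coind

end Delta
namespace Delta

variable {c : MoritaMaps Λ}

lemma theta_E11 (x : Delta c) : (E11 * x).n + (E11 * x).m = x.n := by
  rw [E11_mul]; simp
lemma theta_E12 (x : Delta c) : (E12 * x).n + (E12 * x).m = x.b := by
  rw [E12_mul]; simp
lemma theta_E21 (x : Delta c) : (E21 * x).n + (E21 * x).m = x.a := by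
  rw [E21_mul]; simp
lemma theta_E22 (x : Delta c) : (E22 * x).n + (E22 * x).m = x.m := by
  rw [E22_mul]; simp

/-- The Frobenius isomorphism `Δ ≅ Hom_Λ(Δ, Λ)` of left `Δ`-modules. -/
def frob (c : MoritaMaps Λ) : Delta c ≃ₗ[Delta c] (Delta c →ₗ[Λ] Λ) where
  toFun x :=
    { toFun := fun y => (y * x).n + (y * x).m
      map_add' := fun y y' => by
        simp only [add_mul, add_n, add_m]
        abel
      map_smul' := fun a y => by
        show ((a • y) * x).n + ((a • y) * x).m = a • ((y * x).n + (y * x).m)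
        rw [lam_smul, mul_assoc, iota_mul]
        show a * (y * x).n + a * (y * x).m = a • ((y * x).n + (y * x).m)
        rw [smul_eq_mul, mul_add] }
  invFun g := ⟨g E21, g E11, g E22, g E12⟩
  left_inv x := by
    ext
    · exact theta_E21 x
    · exact theta_E11 x
    · exact theta_E22 x
    · exact theta_E12 x
  right_inv g := by
    ext y
    show (y * ⟨g E21, g E11, g E22, g E12⟩).n + (y * ⟨g E21, g E11, g E22, g E12⟩).m = g y
    simp only [mul_n, mul_m]
    show y.a * g E11 + y.n * g E12 + (y.m * g E21 + y.b * g E22) = g y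
    conv_rhs => rw [← decomp y]
    rw [map_add, map_add, map_add, map_smul, map_smul, map_smul, map_smul]
    simp only [smul_eq_mul]
    abel
  map_add' x x' := by
    ext y
    show (y * (x + x')).n + (y * (x + x')).m =
      ((y * x).n + (y * x).m) + ((y * x').n + (y * x').m)
    rw [mul_add]
    simp only [add_n, add_m]
    abel
  map_smul' x₀ x := by
    ext y
    show (y * (x₀ * x)).n + (y * (x₀ * x)).m = ((y * x₀) * x).n + ((y * x₀) * x).m
    rw [mul_assoc]

theorem dir1 (c : MoritaMaps Λ) (h : ∃ n, HasIDLE Λ n Λ) :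
    ∃ n, HasIDLE (Delta c) n (Delta c) := by
  obtain ⟨n, hn⟩ := h
  exact ⟨n, hasIDLE_congr (frob c).symm (coind_hasIDLE c n Λ hn)⟩

end Delta
namespace Delta

variable {c : MoritaMaps Λ}

/-- The corner element `⟨a,0,0,0⟩`. -/
def dg (c : MoritaMaps Λ) (a : Λ) : Delta c := ⟨a, 0, 0, 0⟩

lemma dg_one : dg c 1 = E11 := rfl
lemma dg_zero : dg c 0 = 0 := by ext <;> rfl
lemma dg_add (a b : Λ) : dg c (a + b) = dg c a + dg c b := by ext <;> simp [dg]
lemma dg_mul_dg (a b : Λ) : dg c a * dg c b = dg c (a * b) := by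
  ext <;> simp [dg, φ_zero_left, φ_zero_right]
lemma E11_idem : (E11 : Delta c) * E11 = E11 := by
  ext <;> simp [E11, φ_zero_left, φ_zero_right]
lemma E11_mul_dg (a : Λ) : (E11 : Delta c) * dg c a = dg c a := by
  ext <;> simp [E11, dg, φ_zero_left, φ_zero_right]
lemma dg_mul_E11 (a : Λ) : dg c a * (E11 : Delta c) = dg c a := by
  ext <;> simp [E11, dg, φ_zero_left, φ_zero_right]
lemma E21_mul_dg (a : Λ) : (E21 : Delta c) * dg c a = ⟨0, 0, a, 0⟩ := by
  ext <;> simp [E21, dg, φ_zero_left, φ_zero_right]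
lemma dg_mul' (a : Λ) (y : Delta c) : dg c a * y = ⟨a * y.a, a * y.n, 0, 0⟩ := by
  ext <;> simp [dg, φ_zero_left, φ_zero_right]

lemma mul_E11_decomp (d : Delta c) : d * E11 = dg c d.a + E21 * dg c d.m := by
  rw [mul_E11, E21_mul_dg]
  ext <;> simp [dg]
lemma mul_E21_decomp (d : Delta c) :
    d * E21 = dg c (d.n * tval c) + E21 * dg c d.b := by
  rw [mul_E21, E21_mul_dg, φ_eq, one_mul]
  ext <;> simp [dg]

section ESubDef
variable (c) (M : Type u) [AddCommGroup M] [Module (Delta c) M]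

/-- The subgroup `e₁₁ M` of a `Δ`-module. -/
def eAddSubgroup : AddSubgroup M where
  carrier := {m | (E11 : Delta c) • m = m}
  add_mem' := by
    intro a b ha hb
    simp only [Set.mem_setOf_eq] at *
    rw [smul_add, ha, hb]
  zero_mem' := by simp
  neg_mem' := by
    intro a ha
    simp only [Set.mem_setOf_eq] at *
    rw [smul_neg, ha]

/-- The corner module `e₁₁ M`, a `Λ`-module. -/
abbrev ESub : Type u := ↥(eAddSubgroup c M)

lemma esub_prop (x : ESub c M) : (E11 : Delta c) • (x : M) = (x : M) := x.2

instance : SMul Λ (ESub c M) :=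
  ⟨fun a x => ⟨dg c a • (x : M), show (E11 : Delta c) • dg c a • (x : M) = _ by
    rw [← mul_smul, E11_mul_dg]⟩⟩

lemma esub_smul_val (a : Λ) (x : ESub c M) :
    ((a • x : ESub c M) : M) = dg c a • (x : M) := rfl

instance : Module Λ (ESub c M) := by
  apply Module.ofMinimalAxioms
  · intro r x y
    apply Subtype.ext
    show dg c r • ((x : M) + (y : M)) = dg c r • (x : M) + dg c r • (y : M)
    rw [smul_add]
  · intro r s x
    apply Subtype.ext
    show dg c (r + s) • (x : M) = dg c r • (x : M) + dg c s • (x : M)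
    rw [dg_add, add_smul]
  · intro r s x
    apply Subtype.ext
    show dg c (r * s) • (x : M) = dg c r • dg c s • (x : M)
    rw [← dg_mul_dg, mul_smul]
  · intro x
    apply Subtype.ext
    show dg c 1 • (x : M) = (x : M)
    rw [dg_one, esub_prop]

end ESubDef

/-- The functor `M ↦ e₁₁ M` on maps. -/
def eMap {M N : Type u} [AddCommGroup M] [Module (Delta c) M] [AddCommGroup N]
    [Module (Delta c) N] (f : M →ₗ[Delta c] N) : ESub c M →ₗ[Λ] ESub c N where
  toFun x := ⟨f (x : M), show (E11 : Delta c) • f (x : M) = f (x : M) by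
    rw [← map_smul, esub_prop]⟩
  map_add' x y := by
    apply Subtype.ext
    show f ((x : M) + (y : M)) = f (x : M) + f (y : M)
    rw [map_add]
  map_smul' a x := by
    apply Subtype.ext
    show f (dg c a • (x : M)) = dg c a • f (x : M)
    rw [map_smul]

lemma eMap_val {M N : Type u} [AddCommGroup M] [Module (Delta c) M] [AddCommGroup N]
    [Module (Delta c) N] (f : M →ₗ[Delta c] N) (x : ESub c M) :
    (eMap f x : N) = f (x : M) := rfl

section IndE
variable (c) (X : Type u) [AddCommGroup X] [Module Λ X]

/-- The induced `Δ`-action on `X × X` (modelling `Δe₁₁ ⊗_Λ X`). -/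
def indSMul : SMul (Delta c) (X × X) :=
  ⟨fun d p => (d.a • p.1 + (d.n * tval c) • p.2, d.m • p.1 + d.b • p.2)⟩

def indModule : Module (Delta c) (X × X) := by
  letI := indSMul c X
  have hsmul : ∀ (d : Delta c) (p : X × X),
      d • p = (d.a • p.1 + (d.n * tval c) • p.2, d.m • p.1 + d.b • p.2) := fun _ _ => rfl
  apply Module.ofMinimalAxioms
  · intro r x y
    simp only [hsmul, Prod.fst_add, Prod.snd_add, smul_add, Prod.mk_add_mk, Prod.mk.injEq]
    constructor <;> abel
  · intro r s x
    simp only [hsmul, add_a, add_n, add_m, add_b, add_smul, add_mul, Prod.mk_add_mk,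
      Prod.mk.injEq]
    constructor <;> abel
  · intro r s x
    have hcm : ∀ (a : Λ) (z : X), a • tval c • z = tval c • a • z := by
      intro a z
      rw [← mul_smul, ← mul_smul, t_comm]
    simp only [hsmul, mul_a, mul_n, mul_m, mul_b, add_smul, add_mul, mul_assoc, mul_smul,
      smul_add, φ_eq, Prod.mk.injEq, mul_one]
    constructor
    · rw [hcm s.m x.1, hcm s.b x.2]
      abel
    · abel
  · intro x
    simp only [hsmul, one_a, one_n, one_m, one_b, one_smul, zero_mul, zero_smul,
      add_zero, zero_add]

end IndE

end Delta
namespace Delta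

variable {c : MoritaMaps Λ}

theorem esub_injective (M : Type u) [AddCommGroup M] [Module (Delta c) M]
    (hM : Module.Injective (Delta c) M) : Module.Injective Λ (ESub c M) where
  out X Y _ _ _ _ i hi f := by
    letI : SMul (Delta c) (X × X) := indSMul c X
    letI : Module (Delta c) (X × X) := indModule c X
    letI : SMul (Delta c) (Y × Y) := indSMul c Y
    letI : Module (Delta c) (Y × Y) := indModule c Y
    have hXs : ∀ (d : Delta c) (p : X × X),
        d • p = (d.a • p.1 + (d.n * tval c) • p.2, d.m • p.1 + d.b • p.2) := fun _ _ => rfl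
    have hYs : ∀ (d : Delta c) (p : Y × Y),
        d • p = (d.a • p.1 + (d.n * tval c) • p.2, d.m • p.1 + d.b • p.2) := fun _ _ => rfl
    let I' : (X × X) →ₗ[Delta c] (Y × Y) :=
      { toFun := fun p => (i p.1, i p.2)
        map_add' := fun p q => by
          show (i (p.1 + q.1), i (p.2 + q.2)) = (i p.1 + i q.1, i p.2 + i q.2)
          rw [map_add, map_add]
        map_smul' := fun d p => by
          show (i (d.a • p.1 + (d.n * tval c) • p.2), i (d.m • p.1 + d.b • p.2)) =
            d • ((i p.1, i p.2) : Y × Y)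
          rw [hYs]
          simp only [map_add, map_smul] }
    have hI' : Function.Injective I' := by
      intro p q hpq
      have h1 : i p.1 = i q.1 := congrArg Prod.fst hpq
      have h2 : i p.2 = i q.2 := congrArg Prod.snd hpq
      exact Prod.ext (hi h1) (hi h2)
    have key : ∀ (d : Delta c) (v : M), (E11 : Delta c) • v = v →
        d • v = dg c d.a • v + (E21 : Delta c) • (dg c d.m • v) := by
      intro d v hv
      conv_lhs => rw [← hv, ← mul_smul, mul_E11_decomp]
      rw [add_smul, ← mul_smul]
    have key2 : ∀ (d : Delta c) (v : M),
        (d * E21) • v = dg c (d.n * tval c) • v + (E21 : Delta c) • (dg c d.b • v) := by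
      intro d v
      rw [mul_E21_decomp, add_smul, ← mul_smul]
    let F : (X × X) →ₗ[Delta c] M :=
      { toFun := fun p => ((f p.1 : M) + (E21 : Delta c) • (f p.2 : M))
        map_add' := fun p q => by
          show ((f (p.1 + q.1) : M) + (E21 : Delta c) • (f (p.2 + q.2) : M)) = _
          rw [map_add, map_add]
          show (((f p.1 + f q.1 : ESub c M)) : M) + (E21 : Delta c) •
            (((f p.2 + f q.2 : ESub c M)) : M) = _
          rw [AddSubgroup.coe_add, AddSubgroup.coe_add, smul_add]
          abel
        map_smul' := fun d p => by
          show ((f (d.a • p.1 + (d.n * tval c) • p.2) : M) +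
            (E21 : Delta c) • (f (d.m • p.1 + d.b • p.2) : M)) =
            d • ((f p.1 : M) + (E21 : Delta c) • (f p.2 : M))
          rw [map_add, map_add, map_smul, map_smul, map_smul, map_smul]
          rw [AddSubgroup.coe_add, AddSubgroup.coe_add]
          rw [esub_smul_val, esub_smul_val, esub_smul_val, esub_smul_val]
          rw [smul_add, smul_add]
          rw [key d (f p.1 : M) (esub_prop _ _ _), ← mul_smul d E21, key2 d (f p.2 : M)]
          abel }
    obtain ⟨G, hG⟩ := hM.out I' hI' F
    let hmap : Y →ₗ[Λ] ESub c M :=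
      { toFun := fun y => ⟨(E11 : Delta c) • G (y, 0), by
          show (E11 : Delta c) • ((E11 : Delta c) • G (y, 0)) = (E11 : Delta c) • G (y, 0)
          rw [← mul_smul, E11_idem]⟩
        map_add' := fun y y' => by
          apply Subtype.ext
          show (E11 : Delta c) • G ((y + y', 0)) = (E11 : Delta c) • G (y, 0) +
            (E11 : Delta c) • G (y', 0)
          have h0 : ((y + y', (0 : Y)) : Y × Y) = (y, 0) + (y', 0) := by
            show (y + y', (0 : Y)) = (y + y', 0 + 0)
            rw [add_zero]
          rw [h0, map_add, smul_add]
        map_smul' := fun a y => by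
          apply Subtype.ext
          show (E11 : Delta c) • G ((a • y, 0)) = dg c a • ((E11 : Delta c) • G (y, 0))
          have h1 : ((a • y, (0 : Y)) : Y × Y) = dg c a • ((y, 0) : Y × Y) := by
            rw [hYs]
            show (a • y, (0 : Y)) = ((dg c a).a • y + ((dg c a).n * tval c) • (0 : Y),
              (dg c a).m • y + (dg c a).b • (0 : Y))
            simp [dg]
          rw [h1, map_smul, ← mul_smul, ← mul_smul, E11_mul_dg, dg_mul_E11] }
    refine ⟨hmap, ?_⟩
    intro x
    apply Subtype.ext
    show (E11 : Delta c) • G ((i x, 0)) = (f x : M)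
    have h1 : ((i x, (0 : Y)) : Y × Y) = I' ((x, 0) : X × X) := by
      show (i x, (0 : Y)) = (i x, i 0)
      rw [map_zero]
    rw [h1, hG]
    show (E11 : Delta c) • ((f x : M) + (E21 : Delta c) • (f (0 : X) : M)) = (f x : M)
    rw [map_zero]
    show (E11 : Delta c) • ((f x : M) + (E21 : Delta c) • ((0 : ESub c M) : M)) = (f x : M)
    rw [ZeroMemClass.coe_zero, smul_zero, add_zero]
    exact esub_prop c M (f x)

end Delta
namespace Delta

variable {c : MoritaMaps Λ}

theorem esub_hasIDLE : ∀ (n : ℕ) (M : Type u) [AddCommGroup M] [Module (Delta c) M],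
    HasIDLE (Delta c) n M → HasIDLE Λ n (ESub c M) := by
  intro n
  induction n with
  | zero => intro M _ _ h; exact esub_injective M h
  | succ n ih =>
    rintro M _ _ ⟨I, _, _, F, hF, hI, hq⟩
    have hinj : Function.Injective (eMap (c := c) F) := by
      intro x y hxy
      apply Subtype.ext
      apply hF
      exact congrArg Subtype.val hxy
    refine ⟨ESub c I, inferInstance, inferInstance, eMap F, hinj, esub_injective I hI, ?_⟩
    let π : ESub c I →ₗ[Λ] ESub c (I ⧸ LinearMap.range F) :=
      eMap ((LinearMap.range F).mkQ)
    have hπs : Function.Surjective π := by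
      rintro ⟨q, hq'⟩
      obtain ⟨z, hz⟩ := Submodule.Quotient.mk_surjective _ q
      have hz' : (LinearMap.range F).mkQ z = q := hz
      refine ⟨⟨(E11 : Delta c) • z, by
        show (E11 : Delta c) • (E11 : Delta c) • z = (E11 : Delta c) • z
        rw [← mul_smul, E11_idem]⟩, ?_⟩
      apply Subtype.ext
      show (LinearMap.range F).mkQ ((E11 : Delta c) • z) = q
      rw [map_smul, hz']
      exact hq'
    have hker : LinearMap.ker π = LinearMap.range (eMap (c := c) F) := by
      ext x
      constructor
      · intro hx
        have hx' : (LinearMap.range F).mkQ (x : I) = 0 := congrArg Subtype.val hx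
        rw [Submodule.mkQ_apply, Submodule.Quotient.mk_eq_zero] at hx'
        obtain ⟨m, hm⟩ := hx'
        have hmE : (E11 : Delta c) • m = m := by
          apply hF
          rw [map_smul, hm]
          exact esub_prop c I x
        refine ⟨⟨m, hmE⟩, ?_⟩
        apply Subtype.ext
        exact hm
      · rintro ⟨m, rfl⟩
        apply Subtype.ext
        show (LinearMap.range F).mkQ (F (m : M)) = 0
        rw [Submodule.mkQ_apply, Submodule.Quotient.mk_eq_zero]
        exact ⟨(m : M), rfl⟩
    have hquot : ((ESub c I) ⧸ LinearMap.range (eMap (c := c) F)) ≃ₗ[Λ]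
        ESub c (I ⧸ LinearMap.range F) :=
      (Submodule.quotEquivOfEq _ _ hker.symm).trans (LinearMap.quotKerEquivOfSurjective π hπs)
    exact hasIDLE_congr hquot.symm (ih _ hq)

/-- `e₁₁ Δ ≅ Λ × Λ` as `Λ`-modules. -/
def esubDeltaEquiv (c : MoritaMaps Λ) : ESub c (Delta c) ≃ₗ[Λ] (Λ × Λ) where
  toFun x := ((x : Delta c).a, (x : Delta c).n)
  invFun p := ⟨⟨p.1, p.2, 0, 0⟩, by
    show (E11 : Delta c) • (⟨p.1, p.2, 0, 0⟩ : Delta c) = _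
    show (E11 : Delta c) * ⟨p.1, p.2, 0, 0⟩ = _
    rw [E11_mul]⟩
  left_inv x := by
    apply Subtype.ext
    have h1 : (E11 : Delta c) * (x : Delta c) = (x : Delta c) := esub_prop c (Delta c) x
    rw [E11_mul] at h1
    exact h1
  right_inv p := rfl
  map_add' x y := by
    show (((x : Delta c) + (y : Delta c)).a, ((x : Delta c) + (y : Delta c)).n) = _
    simp
  map_smul' a x := by
    show ((dg c a • (x : Delta c)).a, (dg c a • (x : Delta c)).n) = _
    show ((dg c a * (x : Delta c)).a, (dg c a * (x : Delta c)).n) = _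
    rw [dg_mul']
    rfl

theorem dir2 (c : MoritaMaps Λ) (h : ∃ n, HasIDLE (Delta c) n (Delta c)) :
    ∃ n, HasIDLE Λ n Λ := by
  obtain ⟨n, hn⟩ := h
  have h1 : HasIDLE Λ n (ESub c (Delta c)) := esub_hasIDLE n (Delta c) hn
  have h2 : HasIDLE Λ n (Λ × Λ) := hasIDLE_congr (esubDeltaEquiv c) h1
  exact ⟨n, hasIDLE_prod_left n Λ Λ h2⟩

end Delta
section OpSide

/-- `S` with its canonical right-module structure is equivalent to the regular module
over `Sᵐᵒᵖ`. -/
def opEquivSelf (S : Type w) [Ring S] : S ≃ₗ[Sᵐᵒᵖ] Sᵐᵒᵖ where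
  toFun := MulOpposite.op
  invFun := MulOpposite.unop
  left_inv _ := rfl
  right_inv _ := rfl
  map_add' _ _ := rfl
  map_smul' r a := by
    show MulOpposite.op (a * r.unop) = r * MulOpposite.op a
    rfl

theorem hasIDLE_regular_transport {S T : Type w} [Ring S] [Ring T] (σ : S ≃+* T) (n : ℕ)
    (h : HasIDLE S n S) : HasIDLE T n T :=
  hasIDLE_transport σ n S T σ.toAddEquiv
    (fun s m => by show σ (s * m) = σ s * σ m; exact σ.map_mul s m) h

variable {Λ : Type u} [Ring Λ]

/-- The opposite Morita context. -/
def opMorita (c : MoritaMaps Λ) : MoritaMaps Λᵐᵒᵖ where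
  φ u v := MulOpposite.op (c.φ v.unop u.unop)
  φ_add_left m m' n := by
    apply MulOpposite.unop_injective
    simp [c.φ_add_right]
  φ_add_right m n n' := by
    apply MulOpposite.unop_injective
    simp [c.φ_add_left]
  φ_mul_left b m n := by
    apply MulOpposite.unop_injective
    simp [c.φ_mul_right]
  φ_mul_right m n b := by
    apply MulOpposite.unop_injective
    simp [c.φ_mul_left]
  φ_balanced m a n := by
    apply MulOpposite.unop_injective
    simp [c.φ_balanced]
  φ_assoc₁ m n m' := by
    apply MulOpposite.unop_injective
    simp [c.φ_assoc₂]
  φ_assoc₂ n m n' := by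
    apply MulOpposite.unop_injective
    simp [c.φ_assoc₁]

/-- The Morita ring of the opposite context is the opposite of the Morita ring. -/
def psiOp (c : MoritaMaps Λ) : Delta (opMorita c) ≃+* (Delta c)ᵐᵒᵖ where
  toFun x := MulOpposite.op ⟨x.a.unop, x.m.unop, x.n.unop, x.b.unop⟩
  invFun y := ⟨MulOpposite.op y.unop.a, MulOpposite.op y.unop.m,
    MulOpposite.op y.unop.n, MulOpposite.op y.unop.b⟩
  left_inv x := by ext <;> rfl
  right_inv y := by
    apply MulOpposite.unop_injective
    ext <;> rfl
  map_add' x y := by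
    apply MulOpposite.unop_injective
    ext <;> rfl
  map_mul' x y := by
    apply MulOpposite.unop_injective
    ext <;> rfl

theorem main_op (c : MoritaMaps Λ) :
    (∃ n, HasIDLE Λᵐᵒᵖ n Λ) ↔ (∃ n, HasIDLE (Delta c)ᵐᵒᵖ n (Delta c)) := by
  constructor
  · rintro ⟨n, hn⟩
    have h1 : HasIDLE Λᵐᵒᵖ n Λᵐᵒᵖ := hasIDLE_congr (opEquivSelf Λ) hn
    obtain ⟨m, hm⟩ := Delta.dir1 (opMorita c) ⟨n, h1⟩
    have h2 : HasIDLE ((Delta c)ᵐᵒᵖ) m ((Delta c)ᵐᵒᵖ) :=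
      hasIDLE_regular_transport (psiOp c) m hm
    exact ⟨m, hasIDLE_congr (opEquivSelf (Delta c)).symm h2⟩
  · rintro ⟨n, hn⟩
    have h1 : HasIDLE ((Delta c)ᵐᵒᵖ) n ((Delta c)ᵐᵒᵖ) :=
      hasIDLE_congr (opEquivSelf (Delta c)) hn
    have h2 : HasIDLE (Delta (opMorita c)) n (Delta (opMorita c)) :=
      hasIDLE_regular_transport (psiOp c).symm n h1
    obtain ⟨m, hm⟩ := Delta.dir2 (opMorita c) ⟨n, h2⟩
    exact ⟨m, hasIDLE_congr (opEquivSelf Λ).symm hm⟩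

end OpSide
/-- Let `Λ` be an Artin algebra over a commutative Artinian ring `R` and let
`Δ_{(φ,φ)}` be the Morita ring of the Morita context with `A = B = M = N = Λ`
and `R`-bilinear structure map `φ = ψ`.  Then `Λ` is Gorenstein if and only if
`Δ_{(φ,φ)}` is Gorenstein (finite injective dimension as a left module and as a
right module over itself). -/
theorem gorenstein_iff_delta_gorenstein {Λ : Type u} [Ring Λ]
    (R : Type u) [CommRing R] [IsArtinianRing R] [Algebra R Λ] [Module.Finite R Λ]
    (c : MoritaMaps Λ)
    (hl : ∀ (r : R) (m n : Λ), c.φ (r • m) n = r • c.φ m n)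
    (hr : ∀ (r : R) (m n : Λ), c.φ m (r • n) = r • c.φ m n) :
    IsGorenstein Λ ↔ IsGorenstein (Delta c) := by
  constructor
  · rintro ⟨h1, h2⟩
    exact ⟨Delta.dir1 c h1, (main_op c).mp h2⟩
  · rintro ⟨h1, h2⟩
    exact ⟨Delta.dir2 c h1, (main_op c).mpr h2⟩
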